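/- arXiv:2509.09383 — 3 statements merged into one kernel-verified Lean document; each statement's English description precedes it below -/
import Mathlib

section
/- Let K be a field of characteristic 3, n ≥ 3, and let W ⊆ K[z_I : I ∈ A(n,2)]₂ be the K-span of the quadrics Q(s,t) := φ(s²)φ(t²) − φ(st)² as s,t range over all linear forms in K[x₀,…,x_n], where φ : K[x]₂ → K-span of {z_I} is the linear isomorphism sending the monomial x^I to z_I. Then dim_K W = n(n+1)(n²+9n+2)/24. -/
open MvPolynomial

/-!
In characteristic `3` we have `Q(s,t) = φ(s²)φ(t²) + 2φ(st)²`, and expanding gives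
`2 Q(s,t) = Σ sₐ s_b t_c t_d S{a,b,c,d}` with the fully symmetric quadric
`S{a,b,c,d} = 2 (z_ab z_cd + z_ac z_bd + z_ad z_bc)`. Conversely every `S{a,b,c,d}` lies in `W`
by polarization, `2` being invertible, so `W` is spanned by the `S m` with `m` running over the
multisets of size `4`. Grading `z_ij` by its content `{i,j}`, the quadric `S m` is homogeneous of
content `m`, so the nonzero `S m` are linearly independent. Finally `S{a,b,c,d}` vanishes iff its
three monomials coincide, i.e. iff `m = {x,x,x,y}`; hence `dim W = C(n+4,4) − (n+1)²`.
-/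

/-- The rank-3 quadric `Q(s,t) = φ(s²)φ(t²) − φ(st)²` associated to the linear forms
`s = Σ sᵢxᵢ`, `t = Σ tᵢxᵢ`, where `φ` sends the degree-2 monomial `xᵢxⱼ` to the
variable `z_{ij}` (variables indexed by unordered pairs, i.e. by `A(n,2)`):
`φ(s²) = Σ_{i,j} sᵢsⱼ z_{ij}`, `φ(st) = Σ_{i,j} sᵢtⱼ z_{ij}`. -/
noncomputable def Qst (K : Type*) [Field K] (n : ℕ) (s t : Fin (n + 1) → K) :
    MvPolynomial (Sym2 (Fin (n + 1))) K :=
  (∑ i, ∑ j, C (s i * s j) * X (Sym2.mk i j)) *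
      (∑ i, ∑ j, C (t i * t j) * X (Sym2.mk i j)) -
    (∑ i, ∑ j, C (s i * t j) * X (Sym2.mk i j)) ^ 2

theorem Multiset.exists_eq_of_card_eq_four {α : Type*} {m : Multiset α} (h : card m = 4) :
    ∃ a b c d, m = {a, b, c, d} := by
  obtain ⟨a, ha⟩ := card_pos_iff_exists_mem.mp (by omega : 0 < card m)
  obtain ⟨m, rfl⟩ := exists_cons_of_mem ha
  obtain ⟨b, c, d, rfl⟩ := card_eq_three.mp (by simpa using h)
  exact ⟨a, b, c, d, rfl⟩

theorem Multiset.triple_injective {α : Type*} :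
    Function.Injective fun p : α × α => ({p.1, p.1, p.1, p.2} : Multiset α) := by
  classical
  rintro ⟨x, y⟩ ⟨x', y'⟩ h
  obtain rfl : x = x' := by
    by_contra hne
    have := congrArg (count x) h
    simp only [insert_eq_cons, count_cons, count_singleton, if_neg hne] at this
    split_ifs at this <;> omega
  simpa using h

theorem Multiset.exists_eq_triple {α : Type*} {a b c d : α} (h₁ : b = c ∨ a = d)
    (h₂ : c = d ∨ a = b) : ∃ x y, ({a, b, c, d} : Multiset α) = {x, x, x, y} := by
  classical
  rcases h₁ with rfl | rfl <;> rcases h₂ with rfl | rfl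
  · exact ⟨b, a, by ext; simp only [insert_eq_cons, count_cons, count_singleton]; omega⟩
  · exact ⟨a, d, rfl⟩
  · exact ⟨c, b, by ext; simp only [insert_eq_cons, count_cons, count_singleton]; omega⟩
  · exact ⟨a, c, by ext; simp only [insert_eq_cons, count_cons, count_singleton]; omega⟩

theorem two_ne_zero_of_charP_three {R : Type*} [AddMonoidWithOne R] [CharP R 3] : (2 : R) ≠ 0 :=
  have := NeZero.of_not_dvd R (p := 3) (n := 2) (by norm_num)
  two_ne_zero

theorem MvPolynomial.X_mul_X_eq_monomial {σ R : Type*} [CommSemiring R] (p q : σ) :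
    (X p * X q : MvPolynomial σ R) = monomial (Finsupp.single p 1 + Finsupp.single q 1) 1 := by
  rw [X, X, monomial_mul, one_mul]

theorem MvPolynomial.monomial_add_monomial_add_monomial_eq_zero_iff {σ R : Type*} [CommRing R]
    [CharP R 3] {α β γ : σ →₀ ℕ} :
    monomial α (1 : R) + monomial β 1 + monomial γ 1 = 0 ↔ α = β ∧ α = γ := by
  classical
  have h2 : (2 : R) ≠ 0 := two_ne_zero_of_charP_three
  have : Nontrivial R := nontrivial_of_ne _ _ h2
  constructor
  · intro h
    have hα := congrArg (coeff α) h
    rw [coeff_add, coeff_add, coeff_monomial, coeff_monomial, coeff_monomial, if_pos rfl,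
      coeff_zero] at hα
    split_ifs at hα with hβ hγ hγ
    · exact ⟨hβ.symm, hγ.symm⟩
    · exact absurd (by linear_combination hα) h2
    · exact absurd (by linear_combination hα) h2
    · exact absurd (by linear_combination hα) one_ne_zero
  · rintro ⟨rfl, rfl⟩
    rw [← map_add, ← map_add, one_add_one_eq_two, two_add_one_eq_three, CharP.ofNat_eq_zero R 3,
      map_zero]

theorem Submodule.mem_of_polarization {K V M : Type*} [DivisionRing K] [Add V] [AddCommGroup M]
    [Module K M] {W : Submodule K M} (h2 : (2 : K) ≠ 0) (f : V → V → M)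
    (hadd_left : ∀ x y z, f (x + y) z = f x z + f y z)
    (hadd_right : ∀ x y z, f x (y + z) = f x y + f x z)
    (hcomm : ∀ x y, f y x = f x y) (hdiag : ∀ x, f x x ∈ W) (x y : V) : f x y ∈ W := by
  have h : (2 : K) • f x y = f (x + y) (x + y) - f x x - f y y := by
    rw [hadd_left, hadd_right, hadd_right, hcomm x y, two_smul]; abel
  rw [← W.smul_mem_iff h2, h]
  exact W.sub_mem (W.sub_mem (hdiag _) (hdiag _)) (hdiag _)

theorem finrank_span_range_eq_natCard_ne_zero {K ι M : Type*} [DivisionRing K] [Fintype ι]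
    [AddCommGroup M] [Module K M] {f : ι → M}
    (hf : LinearIndependent K fun i : {i // f i ≠ 0} => f i) :
    Module.finrank K (Submodule.span K (Set.range f)) = Nat.card {i // f i ≠ 0} := by
  classical
  have hrange : Set.range f \ {0} = Set.range fun i : {i // f i ≠ 0} => f i := by
    ext; aesop
  rw [← Submodule.span_sdiff_singleton_zero, hrange, finrank_span_eq_card hf,
    Nat.card_eq_fintype_card]

theorem Nat.choose_add_four_sub_sq (n : ℕ) :
    (n + 1 + 3).choose 4 - (n + 1) ^ 2 = n * (n + 1) * (n ^ 2 + 9 * n + 2) / 24 := by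
  have h : 24 * (n + 4).choose 4 = (n + 4) * (n + 3) * (n + 2) * (n + 1) := by
    rw [show 24 = factorial 4 from rfl, ← descFactorial_eq_factorial_mul_choose]
    simp only [descFactorial_succ, reduceSubDiff, Nat.add_one_sub_one, tsub_zero, descFactorial_zero,
      mul_one]
    ring
  have hle : (n + 1) ^ 2 ≤ (n + 4).choose 4 :=
    le_of_mul_le_mul_left (by rw [h]; ring_nf; omega) (by norm_num : 0 < 24)
  have key : n * (n + 1) * (n ^ 2 + 9 * n + 2) = 24 * ((n + 4).choose 4 - (n + 1) ^ 2) := by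
    zify [hle] at h ⊢
    linear_combination -h
  rw [key, Nat.mul_div_cancel_left _ (by norm_num)]

section SymmetricQuadric

variable {K ι : Type*} [Field K]

noncomputable def pairVar (p : Multiset ι) : MvPolynomial (Sym2 ι) K :=
  if h : Multiset.card p = 2 then X ((Sym2.equivMultiset ι).symm ⟨p, h⟩) else 0

/-- Twice the symmetrized quadric `z_ab z_cd + z_ac z_bd + z_ad z_bc` of `m = {a,b,c,d}`:
the antidiagonal lists each of the three pairings of `m` twice. -/
noncomputable def symQuad (m : Multiset ι) : MvPolynomial (Sym2 ι) K :=
  ((Multiset.antidiagonal m).map fun pq => pairVar pq.1 * pairVar pq.2).sum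

theorem pairVar_pair (a b : ι) :
    (pairVar (a ::ₘ b ::ₘ 0) : MvPolynomial (Sym2 ι) K) = X s(a, b) := by
  rw [pairVar, dif_pos (by simp)]
  rfl

theorem pairVar_of_card_ne {p : Multiset ι} (h : Multiset.card p ≠ 2) :
    (pairVar p : MvPolynomial (Sym2 ι) K) = 0 := dif_neg h

theorem symQuad_eq (a b c d : ι) :
    (symQuad {a, b, c, d} : MvPolynomial (Sym2 ι) K) =
      2 * (X s(a, b) * X s(c, d) + X s(a, c) * X s(b, d) + X s(a, d) * X s(b, c)) := by
  simp only [symQuad, ← Multiset.cons_zero, Multiset.insert_eq_cons, Multiset.antidiagonal_cons,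
    Multiset.antidiagonal_zero, Multiset.map_cons, Prod.map_apply, id_eq, Multiset.map_zero,
    Multiset.add_cons, Multiset.card_cons, Multiset.card_zero, zero_add,
    Nat.reduceAdd, ne_eq, Nat.reduceEqDiff, not_false_eq_true, pairVar_of_card_ne, zero_mul,
    Nat.succ_ne_self, OfNat.one_ne_ofNat, mul_zero, pairVar_pair, Multiset.sum_cons,
    Multiset.sum_zero, add_zero]
  ring

theorem pairVar_isWeightedHomogeneous (p : Multiset ι) :
    IsWeightedHomogeneous Sym2.toMultiset (pairVar p : MvPolynomial (Sym2 ι) K) p := by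
  rw [pairVar]
  split_ifs with h
  · obtain ⟨a, b, rfl⟩ := Multiset.card_eq_two.mp h
    exact isWeightedHomogeneous_X K _ _
  · exact isWeightedHomogeneous_zero _ _ _

theorem symQuad_mem_weightedHomogeneousSubmodule (m : Multiset ι) :
    (symQuad m : MvPolynomial (Sym2 ι) K) ∈
      weightedHomogeneousSubmodule K Sym2.toMultiset m := by
  refine multiset_sum_mem _ fun x hx => ?_
  obtain ⟨⟨p, q⟩, hpq, rfl⟩ := Multiset.mem_map.mp hx
  rw [mem_weightedHomogeneousSubmodule, ← Multiset.mem_antidiagonal.mp hpq]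
  exact (pairVar_isWeightedHomogeneous p).mul (pairVar_isWeightedHomogeneous q)

theorem linearIndependent_symQuad :
    LinearIndependent K fun m : {m : Sym ι 4 // (symQuad (m : Multiset ι) :
      MvPolynomial (Sym2 ι) K) ≠ 0} => (symQuad (m : Multiset ι) : MvPolynomial (Sym2 ι) K) := by
  classical
  exact ((weightedDecomposition K Sym2.toMultiset).isInternal.submodule_iSupIndep.comp
      (Sym.coe_injective.comp Subtype.val_injective)).linearIndependent _
      (fun _ => symQuad_mem_weightedHomogeneousSubmodule _) fun m => m.2

theorem symQuad_eq_zero_iff [CharP K 3] {a b c d : ι} :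
    (symQuad {a, b, c, d} : MvPolynomial (Sym2 ι) K) = 0 ↔
      (b = c ∨ a = d) ∧ (c = d ∨ a = b) := by
  rw [symQuad_eq, mul_eq_zero, or_iff_right two_ne_zero_of_charP_three, X_mul_X_eq_monomial,
    X_mul_X_eq_monomial, X_mul_X_eq_monomial, monomial_add_monomial_add_monomial_eq_zero_iff,
    Finsupp.single_add_single_eq_single_add_single one_ne_zero one_ne_zero,
    Finsupp.single_add_single_eq_single_add_single one_ne_zero one_ne_zero]
  simp only [Sym2.eq_iff]
  grind

theorem natCard_symQuad_ne_zero [CharP K 3] [Fintype ι] :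
    Nat.card {m : Sym ι 4 // (symQuad (m : Multiset ι) : MvPolynomial (Sym2 ι) K) ≠ 0} =
      (Fintype.card ι + 3).choose 4 - Fintype.card ι ^ 2 := by
  classical
  let triple (p : ι × ι) : {m : Sym ι 4 // (symQuad (m : Multiset ι) :
      MvPolynomial (Sym2 ι) K) = 0} :=
    ⟨⟨{p.1, p.1, p.1, p.2}, by simp⟩, symQuad_eq_zero_iff.mpr (by simp)⟩
  have htriple : Function.Bijective triple := by
    refine ⟨fun p q h => Multiset.triple_injective (congrArg (fun m => m.1.1) h), ?_⟩
    rintro ⟨m, hm⟩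
    obtain ⟨a, b, c, d, habcd⟩ := Multiset.exists_eq_of_card_eq_four m.card_coe
    rw [habcd, symQuad_eq_zero_iff] at hm
    obtain ⟨x, y, hxy⟩ := Multiset.exists_eq_triple hm.1 hm.2
    exact ⟨(x, y), Subtype.ext (Sym.coe_injective (habcd.trans hxy).symm)⟩
  rw [Nat.card_eq_fintype_card, Fintype.card_subtype_compl, Sym.card_sym_eq_choose,
    ← Fintype.card_congr (Equiv.ofBijective triple htriple), Fintype.card_prod, sq]
  rfl

end SymmetricQuadric

section Quadric

variable {K ι : Type*} [Field K] [Fintype ι]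

/-- `φ(st)`, in the notation of `Qst`. -/
noncomputable def phiMul (s t : ι → K) : MvPolynomial (Sym2 ι) K :=
  ∑ i, ∑ j, C (s i * t j) * X s(i, j)

noncomputable def quadric (s t : ι → K) : MvPolynomial (Sym2 ι) K :=
  phiMul s s * phiMul t t - phiMul s t ^ 2

noncomputable def symQuadForm (s s' t t' : ι → K) : MvPolynomial (Sym2 ι) K :=
  ∑ a, ∑ b, ∑ c, ∑ d, C (s a * s' b * (t c * t' d)) * symQuad {a, b, c, d}

theorem phiMul_mul_phiMul (s t u v : ι → K) :
    phiMul s t * phiMul u v =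
      ∑ a, ∑ b, ∑ c, ∑ d, C (s a * t b * (u c * v d)) * (X s(a, b) * X s(c, d)) := by
  simp only [phiMul, Finset.sum_mul]
  simp only [Finset.mul_sum, map_mul]
  refine Finset.sum_congr rfl fun a _ => Finset.sum_congr rfl fun b _ =>
    Finset.sum_congr rfl fun c _ => Finset.sum_congr rfl fun d _ => by ring

theorem symQuadForm_self (s t : ι → K) :
    symQuadForm s s t t = 2 * (phiMul s s * phiMul t t + 2 * phiMul s t ^ 2) := by
  have hac : ∑ a, ∑ b, ∑ c, ∑ d, C (s a * s b * (t c * t d)) * (X s(a, c) * X s(b, d)) =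
      phiMul s t ^ 2 := by
    rw [sq, phiMul_mul_phiMul]
    refine Finset.sum_congr rfl fun a _ => ?_
    rw [Finset.sum_comm]
    refine Finset.sum_congr rfl fun c _ => Finset.sum_congr rfl fun b _ =>
      Finset.sum_congr rfl fun d _ => by ring_nf
  have had : ∑ a, ∑ b, ∑ c, ∑ d, C (s a * s b * (t c * t d)) * (X s(a, d) * X s(b, c)) =
      phiMul s t ^ 2 := by
    rw [sq, phiMul_mul_phiMul]
    refine Finset.sum_congr rfl fun a _ => ?_
    conv_lhs => enter [2, b]; rw [Finset.sum_comm]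
    rw [Finset.sum_comm]
    refine Finset.sum_congr rfl fun d _ => Finset.sum_congr rfl fun b _ =>
      Finset.sum_congr rfl fun c _ => by ring_nf
  simp only [symQuadForm, symQuad_eq, mul_add, mul_left_comm _ (2 : MvPolynomial (Sym2 ι) K),
    Finset.sum_add_distrib, ← Finset.mul_sum, hac, had, phiMul_mul_phiMul]
  ring

theorem symQuadForm_self_eq_two_mul_quadric [CharP K 3] (s t : ι → K) :
    symQuadForm s s t t = 2 * quadric s t := by
  rw [symQuadForm_self, quadric]
  linear_combination (2 * phiMul s t ^ 2) * CharP.ofNat_eq_zero (MvPolynomial (Sym2 ι) K) 3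

theorem symQuadForm_comm₁₂ (s s' t t' : ι → K) :
    symQuadForm s' s t t' = symQuadForm s s' t t' := by
  rw [symQuadForm, Finset.sum_comm]
  refine Finset.sum_congr rfl fun a _ => Finset.sum_congr rfl fun b _ =>
    Finset.sum_congr rfl fun c _ => Finset.sum_congr rfl fun d _ => ?_
  rw [mul_comm (s' b), Multiset.insert_eq_cons b, Multiset.insert_eq_cons a, Multiset.cons_swap]
  rfl

theorem symQuadForm_comm₃₄ (s s' t t' : ι → K) :
    symQuadForm s s' t' t = symQuadForm s s' t t' := by
  unfold symQuadForm
  refine Finset.sum_congr rfl fun a _ => Finset.sum_congr rfl fun b _ => ?_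
  rw [Finset.sum_comm]
  refine Finset.sum_congr rfl fun c _ => Finset.sum_congr rfl fun d _ => ?_
  rw [mul_comm (t' d), Multiset.pair_comm]

theorem symQuadForm_single [DecidableEq ι] (a b c d : ι) :
    symQuadForm (Pi.single a 1) (Pi.single b 1) (Pi.single c 1) (Pi.single d (1 : K)) =
      symQuad {a, b, c, d} := by
  simp [symQuadForm, Pi.single_apply, ite_mul, apply_ite C, Finset.sum_ite_eq']

theorem symQuadForm_mem_of_self_mem {W : Submodule K (MvPolynomial (Sym2 ι) K)}
    (h2 : (2 : K) ≠ 0) (hW : ∀ s t, symQuadForm s s t t ∈ W) (s s' t t' : ι → K) :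
    symQuadForm s s' t t' ∈ W := by
  have hs : ∀ s s' t, symQuadForm s s' t t ∈ W := fun s s' t =>
    Submodule.mem_of_polarization h2 (fun s s' => symQuadForm s s' t t)
      (by intros; simp [symQuadForm, add_mul, Finset.sum_add_distrib])
      (by intros; simp [symQuadForm, add_mul, mul_add, Finset.sum_add_distrib])
      (fun _ _ => symQuadForm_comm₁₂ ..) (fun s => hW s t) s s'
  exact Submodule.mem_of_polarization h2 (fun t t' => symQuadForm s s' t t')
    (by intros; simp [symQuadForm, add_mul, mul_add, Finset.sum_add_distrib])
    (by intros; simp [symQuadForm, add_mul, mul_add, Finset.sum_add_distrib])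
    (fun _ _ => symQuadForm_comm₃₄ ..) (hs s s') t t'

theorem span_range_quadric_eq [CharP K 3] :
    Submodule.span K (Set.range fun p : (ι → K) × (ι → K) => quadric p.1 p.2) =
      Submodule.span K (Set.range fun m : Sym ι 4 => (symQuad (m : Multiset ι) :
        MvPolynomial (Sym2 ι) K)) := by
  classical
  have h2 : (2 : K) ≠ 0 := two_ne_zero_of_charP_three
  have hC2 : (2 : MvPolynomial (Sym2 ι) K) = C 2 := (map_ofNat C 2).symm
  apply le_antisymm
  · rw [Submodule.span_le]
    rintro _ ⟨⟨s, t⟩, rfl⟩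
    rw [SetLike.mem_coe, ← Submodule.smul_mem_iff _ h2, smul_eq_C_mul, ← hC2,
      ← symQuadForm_self_eq_two_mul_quadric]
    refine Submodule.sum_mem _ fun a _ => Submodule.sum_mem _ fun b _ =>
      Submodule.sum_mem _ fun c _ => Submodule.sum_mem _ fun d _ => ?_
    rw [← smul_eq_C_mul]
    exact Submodule.smul_mem _ _ (Submodule.subset_span ⟨⟨{a, b, c, d}, by simp⟩, rfl⟩)
  · rw [Submodule.span_le]
    rintro _ ⟨m, rfl⟩
    obtain ⟨a, b, c, d, habcd⟩ := Multiset.exists_eq_of_card_eq_four m.card_coe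
    change (symQuad (m : Multiset ι) : MvPolynomial (Sym2 ι) K) ∈ _
    rw [habcd, ← symQuadForm_single]
    refine symQuadForm_mem_of_self_mem h2 (fun s t => ?_) _ _ _ _
    rw [symQuadForm_self_eq_two_mul_quadric, hC2, ← smul_eq_C_mul]
    exact Submodule.smul_mem _ _ (Submodule.subset_span ⟨(s, t), rfl⟩)

end Quadric

theorem stmt_10_general (K : Type*) [Field K] [CharP K 3] (n : ℕ) :
    Module.finrank K
        (Submodule.span K
          (Set.range fun p : (Fin (n + 1) → K) × (Fin (n + 1) → K) => Qst K n p.1 p.2))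
      = n * (n + 1) * (n ^ 2 + 9 * n + 2) / 24 := by
  have hQ : (fun p : (Fin (n + 1) → K) × (Fin (n + 1) → K) => Qst K n p.1 p.2) =
      fun p => quadric p.1 p.2 := rfl
  rw [hQ, span_range_quadric_eq, finrank_span_range_eq_natCard_ne_zero linearIndependent_symQuad,
    natCard_symQuad_ne_zero, Fintype.card_fin, Nat.choose_add_four_sub_sq]

/-- Over a field `K` of characteristic `3` and `n ≥ 3`, the span `W` of the quadrics
`Q(s,t)` over all linear forms `s,t` has dimension `n(n+1)(n²+9n+2)/24`. -/
theorem stmt_10 (K : Type*) [Field K] [CharP K 3] (n : ℕ) (hn : 3 ≤ n) :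
    Module.finrank K
        (Submodule.span K
          (Set.range fun p : (Fin (n + 1) → K) × (Fin (n + 1) → K) => Qst K n p.1 p.2))
      = n * (n + 1) * (n ^ 2 + 9 * n + 2) / 24 :=
  stmt_10_general K n
end

section
/- Let K be an integral domain and s, t, h ∈ K[x₀,…,x_n] homogeneous polynomials with h ≠ 0. Then the element (s⊗s·h) ⊙ (t⊗t·h) − (s·t·h) ⊙ (s·t·h) of the symmetric square Sym²(K[x]_{2a+b}) (where deg s = deg t = a, deg h = b) is zero if and only if s and t are K-linearly dependent. Equivalently: the quadratic polynomial Q := Z₁Z₂ − Z₃² vanishes identically under the substitution Z₁ = s²h, Z₂ = t²h, Z₃ = sth (always), while the corresponding element s²h ⊙ t²h − sth ⊙ sth of the divided/symmetric square of the space of forms of degree 2a+b is nonzero precisely when {s,t} is linearly independent. -/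
/-!
In a basis, `x ⊗ y + y ⊗ x = 2 • z ⊗ z` says `x i * y j + y i * x j = 2 * (z i * z j)` for all
`i, j`, and `2 * (x i * z j - z i * x j) ^ 2` lies in the ideal generated by these relations, so
`x` and `z` are linearly dependent. For `x = s²h = s·(sh)` and `z = sth = t·(sh)` this is the dependence
of `s` and `t` once the nonzero factor `sh` is cancelled. Conversely the defect
`x ⊗ y + y ⊗ x - 2 • z ⊗ z` is symmetric in `s, t`, scales by `c²` when `s` is scaled by `c` and
vanishes when `s = t`; so a relation `c • s = -d • t` with `c ≠ 0` kills `c²` times it, and the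
tensor square of a free module over a domain is torsion-free.
-/

open MvPolynomial TensorProduct

section SymmetricSquare

variable {K M : Type*} [CommRing K] [AddCommGroup M] [Module K M]

theorem Module.Basis.repr_mul_add_repr_mul_of_tmul_add_tmul {ι : Type*} (B : Module.Basis ι K M)
    {x y z : M} (h : x ⊗ₜ[K] y + y ⊗ₜ[K] x = (2 : K) • (z ⊗ₜ[K] z)) (i j : ι) :
    B.repr x i * B.repr y j + B.repr y i * B.repr x j = 2 * (B.repr z i * B.repr z j) := by
  have := congrArg (fun w => (B.tensorProduct B).repr w (i, j)) h
  simp only [map_add, map_smul, Finsupp.add_apply, Finsupp.smul_apply,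
    Module.Basis.tensorProduct_repr_tmul_apply, smul_eq_mul] at this
  linear_combination this

theorem mul_eq_mul_of_add_eq_two_mul {ι : Type*} [IsDomain K] (h2 : (2 : K) ≠ 0)
    {x y z : ι → K} (h : ∀ i j, x i * y j + y i * x j = 2 * (z i * z j)) (i j : ι) :
    x i * z j = z i * x j := by
  have hsq : 2 * (x i * z j - z i * x j) ^ 2 = 0 := by
    linear_combination (2 * x i * x j) * h i j - x j ^ 2 * h i i - x i ^ 2 * h j j
  exact sub_eq_zero.mp (pow_eq_zero_iff two_ne_zero |>.mp ((mul_eq_zero.mp hsq).resolve_left h2))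

theorem Module.Basis.not_linearIndependent_pair_of_repr_mul_eq {ι : Type*} [Nontrivial K]
    (B : Module.Basis ι K M) {u v : M}
    (h : ∀ i j, B.repr u i * B.repr v j = B.repr v i * B.repr u j) :
    ¬ LinearIndependent K ![u, v] := by
  intro hli
  obtain ⟨i, hi⟩ := Finsupp.ne_iff.mp (B.repr.map_ne_zero_iff.mpr (hli.ne_zero 1))
  refine hi (LinearIndependent.pair_iff.mp hli (B.repr v i) (-B.repr u i)
    (B.ext_elem fun j => ?_)).1
  simp only [map_add, map_smul, Finsupp.add_apply, Finsupp.smul_apply, smul_eq_mul, map_zero,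
    Finsupp.coe_zero, Pi.zero_apply]
  linear_combination -(h i j)

theorem not_linearIndependent_pair_of_tmul_add_tmul_eq [IsDomain K] [Module.Free K M]
    (h2 : (2 : K) ≠ 0) {x y z : M} (h : x ⊗ₜ[K] y + y ⊗ₜ[K] x = (2 : K) • (z ⊗ₜ[K] z)) :
    ¬ LinearIndependent K ![x, z] :=
  let B := Module.Free.chooseBasis K M
  B.not_linearIndependent_pair_of_repr_mul_eq
    (mul_eq_mul_of_add_eq_two_mul h2 (B.repr_mul_add_repr_mul_of_tmul_add_tmul h))

end SymmetricSquare

theorem linearIndependent_pair_mul_right_iff {K A : Type*} [CommRing K] [Ring A] [IsDomain A]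
    [Algebra K A] {a b u : A} (hu : u ≠ 0) :
    LinearIndependent K ![a * u, b * u] ↔ LinearIndependent K ![a, b] := by
  have hcomp : ![a * u, b * u] = LinearMap.mulRight K u ∘ ![a, b] := by
    ext i; fin_cases i <;> rfl
  rw [hcomp, LinearMap.linearIndependent_iff]
  exact LinearMap.ker_eq_bot.mpr (mul_left_injective₀ hu)

section Quadric

variable {K A : Type*} [CommRing K] [CommRing A] [Algebra K A]

def quadricDefect (s t h : A) : A ⊗[K] A :=
  (s ^ 2 * h) ⊗ₜ[K] (t ^ 2 * h) + (t ^ 2 * h) ⊗ₜ[K] (s ^ 2 * h) -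
    (2 : K) • ((s * t * h) ⊗ₜ[K] (s * t * h))

theorem quadricDefect_comm (s t h : A) : quadricDefect (K := K) s t h = quadricDefect t s h := by
  rw [quadricDefect, quadricDefect, add_comm, mul_comm s t]

theorem quadricDefect_self (t h : A) : quadricDefect (K := K) t t h = 0 := by
  rw [quadricDefect, ← pow_two, two_smul, sub_self]

theorem quadricDefect_smul_left (c : K) (s t h : A) :
    quadricDefect (c • s) t h = c ^ 2 • quadricDefect (K := K) s t h := by
  have hx : (c • s) ^ 2 * h = c ^ 2 • (s ^ 2 * h) := by rw [smul_pow, smul_mul_assoc]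
  have hz : c • s * t * h = c • (s * t * h) := by rw [smul_mul_assoc, smul_mul_assoc]
  simp only [quadricDefect, hx, hz, ← smul_tmul', tmul_smul]
  module

theorem quadricDefect_eq_zero_of_not_linearIndependent [IsDomain K]
    [Module.IsTorsionFree K (A ⊗[K] A)] {s t : A} (hst : ¬ LinearIndependent K ![s, t]) (h : A) :
    quadricDefect (K := K) s t h = 0 := by
  obtain ⟨c, d, hcd, hne⟩ : ∃ c d : K, c • s + d • t = 0 ∧ (c ≠ 0 ∨ d ≠ 0) := by
    simpa [LinearIndependent.pair_iff, or_iff_not_and_not] using hst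
  wlog hc : c ≠ 0 generalizing s t c d
  · rw [quadricDefect_comm]
    exact this (fun h' => hst (LinearIndependent.pair_symm_iff.mp h')) d c (by rwa [add_comm])
      hne.symm (hne.resolve_left hc)
  have hs : c • s = (-d) • t := by rw [neg_smul, eq_neg_iff_add_eq_zero, hcd]
  have := quadricDefect_smul_left (K := K) c s t h
  rw [hs, quadricDefect_smul_left, quadricDefect_self, smul_zero] at this
  exact (smul_eq_zero.mp this.symm).resolve_left (pow_ne_zero 2 hc)

end Quadric

theorem stmt_14_general (K : Type*) [CommRing K] [IsDomain K] (h2 : (2 : K) ≠ 0)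
    (n : ℕ) (s t h : MvPolynomial (Fin (n + 1)) K)
    (hne : h ≠ 0) :
    (s ^ 2 * h) * (t ^ 2 * h) = (s * t * h) ^ 2 ∧
    (((s ^ 2 * h) ⊗ₜ[K] (t ^ 2 * h) + (t ^ 2 * h) ⊗ₜ[K] (s ^ 2 * h)
        = (2 : K) • ((s * t * h) ⊗ₜ[K] (s * t * h)))
      ↔ ¬ LinearIndependent K ![s, t]) := by
  refine ⟨by ring, fun hsym => ?_, fun hdep => ?_⟩
  · by_cases hs : s = 0
    · exact fun hli => hli.ne_zero 0 hs
    have hdep := not_linearIndependent_pair_of_tmul_add_tmul_eq h2 hsym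
    rwa [show s ^ 2 * h = s * (s * h) by ring, show s * t * h = t * (s * h) by ring,
      linearIndependent_pair_mul_right_iff (mul_ne_zero hs hne)] at hdep
  · exact sub_eq_zero.mp (quadricDefect_eq_zero_of_not_linearIndependent hdep h)

/-- Let `K` be an integral domain (with `2 ≠ 0`, as in the blanket `char ≠ 2`
assumption), and let `s, t, h` be homogeneous polynomials of degrees `a, a, b` with
`h ≠ 0`. Then the quadric relation `(s²h)(t²h) = (sth)²` always holds, while the
element `s²h ⊙ t²h − sth ⊙ sth` of the symmetric square (here expressed in the tensor
square: `s²h ⊗ t²h + t²h ⊗ s²h − 2·(sth ⊗ sth)`) vanishes if and only if `s` and `t`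
are `K`-linearly dependent. -/
theorem stmt_14 (K : Type*) [CommRing K] [IsDomain K] (h2 : (2 : K) ≠ 0)
    (n a b : ℕ) (s t h : MvPolynomial (Fin (n + 1)) K)
    (hs : s.IsHomogeneous a) (ht : t.IsHomogeneous a) (hh : h.IsHomogeneous b)
    (hne : h ≠ 0) :
    (s ^ 2 * h) * (t ^ 2 * h) = (s * t * h) ^ 2 ∧
    (((s ^ 2 * h) ⊗ₜ[K] (t ^ 2 * h) + (t ^ 2 * h) ⊗ₜ[K] (s ^ 2 * h)
        = (2 : K) • ((s * t * h) ⊗ₜ[K] (s * t * h)))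
      ↔ ¬ LinearIndependent K ![s, t]) :=
  stmt_14_general K h2 n s t h hne
end

section
/- Let K be a field of characteristic 3 and d ≥ 3. In K[z_I : I ∈ A(n,d)], for any M, N ∈ A(n,d−2) and indices i, j, k ∈ {0,…,n}, the binomial combination (z_{2e_i+M}·z_{e_j+e_k+N} + z_{e_j+e_k+M}·z_{2e_i+N}) − (z_{e_i+e_j+M}·z_{e_i+e_k+N} + z_{e_i+e_k+M}·z_{e_i+e_j+N}) can be written as a K-linear combination of quadrics of the form φ(s²h)φ(t²h) − φ(sth)², where s,t are linear forms, h is a form of degree d−2 in K[x₀,…,x_n], and φ : K[x]_d → ⟨z_I⟩_K is the isomorphism x^I ↦ z_I. -/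
/-!
The quadric `Q(s, t, h) = φ(s²h)φ(t²h) − φ(sth)²` is quadratic in `t` and in `h`. Its mixed
second difference in `t = x_j + x_k` and `h = x^M + x^N`, a combination of nine quadrics of the
same shape, is twice the given binomial combination; and `2` is invertible in characteristic 3.
-/

open MvPolynomial

/-- The linear identification `φ : x^I ↦ z_I` from polynomials in `x₀,…,x_n` to linear
forms in the variables `z_I` (indexed by exponent vectors). -/
noncomputable def phiV (K : Type*) [Field K] (n : ℕ) (p : MvPolynomial (Fin (n + 1)) K) :
    MvPolynomial (Fin (n + 1) →₀ ℕ) K :=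
  ∑ I ∈ p.support, C (p.coeff I) * X I

section Polarization

variable {R A : Type*} [CommRing R] [CommRing A] (f : R →+ A)

def rank3Quadric (s t h : R) : A := f (s ^ 2 * h) * f (t ^ 2 * h) - f (s * t * h) ^ 2

theorem rank3Quadric_bipolarization (s t₁ t₂ h₁ h₂ : R) :
    (rank3Quadric f s (t₁ + t₂) (h₁ + h₂) - rank3Quadric f s (t₁ + t₂) h₁
        - rank3Quadric f s (t₁ + t₂) h₂)
      - (rank3Quadric f s t₁ (h₁ + h₂) - rank3Quadric f s t₁ h₁ - rank3Quadric f s t₁ h₂)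
      - (rank3Quadric f s t₂ (h₁ + h₂) - rank3Quadric f s t₂ h₁ - rank3Quadric f s t₂ h₂)
    = 2 * (f (s ^ 2 * h₁) * f (t₁ * t₂ * h₂) + f (s ^ 2 * h₂) * f (t₁ * t₂ * h₁)
        - f (s * t₁ * h₁) * f (s * t₂ * h₂) - f (s * t₁ * h₂) * f (s * t₂ * h₁)) := by
  simp only [rank3Quadric, sq, mul_add, add_mul, map_add, mul_comm t₂ t₁]
  ring

end Polarization

section Veronese

theorem X_sq_mul_monomial {σ R : Type*} [CommSemiring R] (i : σ) (M : σ →₀ ℕ) :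
    X i ^ 2 * monomial M (1 : R) = monomial (Finsupp.single i 2 + M) 1 := by
  rw [X_pow_eq_monomial, monomial_mul, one_mul]

theorem X_mul_X_mul_monomial {σ R : Type*} [CommSemiring R] (i j : σ) (M : σ →₀ ℕ) :
    X i * X j * monomial M (1 : R) =
      monomial (Finsupp.single i 1 + Finsupp.single j 1 + M) 1 := by
  rw [X, X, monomial_mul, monomial_mul, one_mul, one_mul]

variable (K : Type*) [Field K] (n : ℕ)

noncomputable def phiVLinear :
    MvPolynomial (Fin (n + 1)) K →ₗ[K] MvPolynomial (Fin (n + 1) →₀ ℕ) K :=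
  AddMonoidAlgebra.mapDomainLinearMap K K fun I => Finsupp.single I 1

theorem phiVLinear_apply (p : MvPolynomial (Fin (n + 1)) K) : phiVLinear K n p = phiV K n p := by
  conv_lhs => rw [p.as_sum]
  simp [phiVLinear, phiV, C_mul_X_eq_monomial, ← single_eq_monomial]

theorem phiV_monomial_one (I : Fin (n + 1) →₀ ℕ) : phiV K n (monomial I 1) = X I := by
  rw [← phiVLinear_apply, phiVLinear, ← single_eq_monomial,
    AddMonoidAlgebra.mapDomainLinearMap_single]
  rfl

noncomputable def rank3Span (d : ℕ) : Submodule K (MvPolynomial (Fin (n + 1) →₀ ℕ) K) :=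
  Submodule.span K
    {q : MvPolynomial (Fin (n + 1) →₀ ℕ) K |
      ∃ s t h : MvPolynomial (Fin (n + 1)) K,
        s.IsHomogeneous 1 ∧ t.IsHomogeneous 1 ∧ h.IsHomogeneous (d - 2) ∧
          q = phiV K n (s ^ 2 * h) * phiV K n (t ^ 2 * h) - (phiV K n (s * t * h)) ^ 2}

variable {K n} {d : ℕ} {s t t₁ t₂ h h₁ h₂ : MvPolynomial (Fin (n + 1)) K}

theorem rank3Quadric_mem_rank3Span (hs : s.IsHomogeneous 1) (ht : t.IsHomogeneous 1)
    (hh : h.IsHomogeneous (d - 2)) :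
    rank3Quadric (phiVLinear K n).toAddMonoidHom s t h ∈ rank3Span K n d :=
  Submodule.subset_span ⟨s, t, h, hs, ht, hh, by simp [rank3Quadric, phiVLinear_apply]⟩

theorem bipolarization_mem_rank3Span (h2 : (2 : K) ≠ 0) (hs : s.IsHomogeneous 1)
    (ht₁ : t₁.IsHomogeneous 1) (ht₂ : t₂.IsHomogeneous 1)
    (hh₁ : h₁.IsHomogeneous (d - 2)) (hh₂ : h₂.IsHomogeneous (d - 2)) :
    phiV K n (s ^ 2 * h₁) * phiV K n (t₁ * t₂ * h₂)
        + phiV K n (s ^ 2 * h₂) * phiV K n (t₁ * t₂ * h₁)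
        - phiV K n (s * t₁ * h₁) * phiV K n (s * t₂ * h₂)
        - phiV K n (s * t₁ * h₂) * phiV K n (s * t₂ * h₁) ∈ rank3Span K n d := by
  rw [← Submodule.smul_mem_iff _ h2, smul_eq_C_mul, map_ofNat]
  simp only [← phiVLinear_apply, ← LinearMap.toAddMonoidHom_coe]
  rw [← rank3Quadric_bipolarization]
  have hQ {t h : MvPolynomial (Fin (n + 1)) K} (ht : t.IsHomogeneous 1)
      (hh : h.IsHomogeneous (d - 2)) :=
    rank3Quadric_mem_rank3Span hs ht hh
  have ht := ht₁.add ht₂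
  have hh := hh₁.add hh₂
  exact sub_mem (sub_mem (sub_mem (sub_mem (hQ ht hh) (hQ ht hh₁)) (hQ ht hh₂))
    (sub_mem (sub_mem (hQ ht₁ hh) (hQ ht₁ hh₁)) (hQ ht₁ hh₂)))
    (sub_mem (sub_mem (hQ ht₂ hh) (hQ ht₂ hh₁)) (hQ ht₂ hh₂))

end Veronese

theorem stmt_18_general (K : Type*) [Field K] [CharP K 3] (n d : ℕ)
    (M N : Fin (n + 1) →₀ ℕ) (hM : ∑ i, M i = d - 2) (hN : ∑ i, N i = d - 2)
    (i j k : Fin (n + 1)) :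
    (X (Finsupp.single i 2 + M) * X (Finsupp.single j 1 + Finsupp.single k 1 + N)
        + X (Finsupp.single j 1 + Finsupp.single k 1 + M) * X (Finsupp.single i 2 + N))
      - (X (Finsupp.single i 1 + Finsupp.single j 1 + M) *
            X (Finsupp.single i 1 + Finsupp.single k 1 + N)
          + X (Finsupp.single i 1 + Finsupp.single k 1 + M) *
            X (Finsupp.single i 1 + Finsupp.single j 1 + N))
      ∈ Submodule.span K
          {q : MvPolynomial (Fin (n + 1) →₀ ℕ) K |
            ∃ s t h : MvPolynomial (Fin (n + 1)) K,
              s.IsHomogeneous 1 ∧ t.IsHomogeneous 1 ∧ h.IsHomogeneous (d - 2) ∧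
                q = phiV K n (s ^ 2 * h) * phiV K n (t ^ 2 * h)
                      - (phiV K n (s * t * h)) ^ 2} := by
  have h2 : (2 : K) ≠ 0 := Ring.two_ne_zero (by rw [ringChar.eq K 3]; norm_num)
  have hom {L : Fin (n + 1) →₀ ℕ} (hL : ∑ i, L i = d - 2) :
      (monomial L (1 : K)).IsHomogeneous (d - 2) :=
    isHomogeneous_monomial _ (by rw [Finsupp.degree_eq_sum, hL])
  have key := bipolarization_mem_rank3Span h2 (isHomogeneous_X K i) (isHomogeneous_X K j)
    (isHomogeneous_X K k) (hom hM) (hom hN)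
  simp only [X_sq_mul_monomial, X_mul_X_mul_monomial, phiV_monomial_one] at key
  show _ ∈ rank3Span K n d
  convert key using 1
  ring

/-- Over a field `K` of characteristic 3 and `d ≥ 3`: for any `M, N ∈ A(n,d−2)` and any
indices `i,j,k`, the combination
`(z_{2e_i+M}·z_{e_j+e_k+N} + z_{e_j+e_k+M}·z_{2e_i+N}) −
 (z_{e_i+e_j+M}·z_{e_i+e_k+N} + z_{e_i+e_k+M}·z_{e_i+e_j+N})`
is a `K`-linear combination of the rank-3 quadrics `φ(s²h)φ(t²h) − φ(sth)²` with `s,t`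
linear forms and `h` a form of degree `d−2`. -/
theorem stmt_18 (K : Type*) [Field K] [CharP K 3] (n d : ℕ) (hd : 3 ≤ d)
    (M N : Fin (n + 1) →₀ ℕ) (hM : ∑ i, M i = d - 2) (hN : ∑ i, N i = d - 2)
    (i j k : Fin (n + 1)) :
    (X (Finsupp.single i 2 + M) * X (Finsupp.single j 1 + Finsupp.single k 1 + N)
        + X (Finsupp.single j 1 + Finsupp.single k 1 + M) * X (Finsupp.single i 2 + N))
      - (X (Finsupp.single i 1 + Finsupp.single j 1 + M) *
            X (Finsupp.single i 1 + Finsupp.single k 1 + N)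
          + X (Finsupp.single i 1 + Finsupp.single k 1 + M) *
            X (Finsupp.single i 1 + Finsupp.single j 1 + N))
      ∈ Submodule.span K
          {q : MvPolynomial (Fin (n + 1) →₀ ℕ) K |
            ∃ s t h : MvPolynomial (Fin (n + 1)) K,
              s.IsHomogeneous 1 ∧ t.IsHomogeneous 1 ∧ h.IsHomogeneous (d - 2) ∧
                q = phiV K n (s ^ 2 * h) * phiV K n (t ^ 2 * h)
                      - (phiV K n (s * t * h)) ^ 2} :=
  stmt_18_general K n d M N hM hN i j k
end
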